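/- Let M be a matching in a graph G with no augmenting paths of length ≤ 2K−1. Let M' be obtained from M by flipping a set of pairwise vertex-disjoint (2K+1)-augmenting paths. If p is an augmenting path for M' of length ≤ 2K+1, then p is already an augmenting path for M (i.e., p contains no flipped edge). -/

import Mathlib

variable {V : Type*}

/-- The list of edges of a path given by its list of vertices. -/
def pathEdges (p : List V) : List (Sym2 V) :=
  List.zipWith (fun a b => s(a, b)) p p.tail

/-- `M` is a matching in `G`: a set of edges of `G` no two of which share a vertex. -/
def IsMatching (G : SimpleGraph V) (M : Set (Sym2 V)) : Prop :=
  M ⊆ G.edgeSet ∧ ∀ e ∈ M, ∀ f ∈ M, e ≠ f → ∀ v : V, v ∈ e → v ∉ f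

/-- A vertex is covered by `M` if it is incident with some edge of `M`. -/
def Covered (M : Set (Sym2 V)) (v : V) : Prop :=
  ∃ e ∈ M, v ∈ e

/-- `p` (a list of vertices) is an augmenting path for the matching `M` in `G`:
a simple path whose edges alternate out of/in `M` (starting and ending with a
non-matching edge, so it has an odd number of edges, i.e. an even number of
vertices) and whose endpoints are uncovered by `M`. -/
def IsAugPath (G : SimpleGraph V) (M : Set (Sym2 V)) (p : List V) : Prop :=
  p.Nodup ∧ p.Chain' G.Adj ∧ 2 ≤ p.length ∧ p.length % 2 = 0 ∧
  (∀ (i : ℕ) (h : i < (pathEdges p).length),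
      ((pathEdges p).get ⟨i, h⟩ ∈ M ↔ i % 2 = 1)) ∧
  (∀ v : V, p.head? = some v ∨ p.getLast? = some v → ¬ Covered M v)


/-!
Let `N` be `M'` with `p` flipped, so that `M ∆ N` is the symmetric difference of the edges of `p`
and those of the paths in `P`. Let `T` be the finitely many paths of `P` meeting `p`, and `R` the vertices of `p` and of
the paths in `T`: `R` is closed under the edges of `M ∆ N` and covered by `N`. Its `2 + 2|T|`
`M`-free vertices (the ends of `p` and of the paths in `T`) are paired up by `M ∆ N`-alternating
paths, which are disjoint `M`-augmenting paths inside `R` with at least `2K + 2` vertices each.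
As every path in `T` shares a vertex with `p`, `|R| ≤ (2K + 2) + |T|(2K + 1)`, so `T` is empty:
`p` avoids the flipped paths and is already `M`-augmenting.
-/

theorem pathEdges_length (p : List V) : (pathEdges p).length = p.length - 1 := by
  simp [pathEdges]

theorem getElem_pathEdges (p : List V) (i : ℕ) (h : i < (pathEdges p).length) :
    (pathEdges p)[i] = s(p[i]'(by rw [pathEdges_length] at h; omega),
      p[i + 1]'(by rw [pathEdges_length] at h; omega)) := by
  simp [pathEdges]

theorem mem_pathEdges_iff {p : List V} {e : Sym2 V} :
    e ∈ pathEdges p ↔ ∃ i, ∃ h : i + 1 < p.length, e = s(p[i], p[i + 1]) := by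
  rw [List.mem_iff_getElem]
  constructor
  · rintro ⟨i, hi, rfl⟩
    rw [pathEdges_length] at hi
    exact ⟨i, by omega, getElem_pathEdges p i _⟩
  · rintro ⟨i, hi, rfl⟩
    exact ⟨i, by rw [pathEdges_length]; omega, getElem_pathEdges p i _⟩

theorem getElem_mem_pathEdges {p : List V} {i : ℕ} (h : i + 1 < p.length) :
    s(p[i], p[i + 1]) ∈ pathEdges p :=
  mem_pathEdges_iff.2 ⟨i, h, rfl⟩

theorem mem_of_mem_pathEdges {p : List V} {e : Sym2 V} (he : e ∈ pathEdges p) {v : V}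
    (hv : v ∈ e) : v ∈ p := by
  obtain ⟨i, hi, rfl⟩ := mem_pathEdges_iff.1 he
  rcases Sym2.mem_iff.1 hv with rfl | rfl <;> exact List.getElem_mem _

theorem IsMatching.eq_of_mem {G : SimpleGraph V} {M : Set (Sym2 V)} (hM : IsMatching G M)
    {e f : Sym2 V} (he : e ∈ M) (hf : f ∈ M) {v : V} (hve : v ∈ e) (hvf : v ∈ f) :
    e = f := by
  by_contra hne
  exact hM.2 e he f hf hne v hve hvf

theorem List.Nodup.eq_or_eq_of_getElem_mem {l : List V} (hl : l.Nodup) {i k : ℕ}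
    (hi : i < l.length) (hk : k + 1 < l.length) (h : l[i] ∈ s(l[k], l[k + 1])) :
    i = k ∨ i = k + 1 := by
  rcases Sym2.mem_iff.1 h with h | h
  · exact Or.inl ((hl.getElem_inj_iff).1 h)
  · exact Or.inr ((hl.getElem_inj_iff).1 h)

theorem List.Nodup.add_two_eq_length {l : List V} (hl : l.Nodup) {k : ℕ}
    (hk : k + 1 < l.length) (h : l[l.length - 1] ∈ s(l[k], l[k + 1])) : k + 2 = l.length := by
  have := hl.eq_or_eq_of_getElem_mem _ hk h
  omega

theorem exists_parity_edge_mem (l : List V) {i c : ℕ} (hi : i < l.length)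
    (hnext : i % 2 = c → i + 1 < l.length) (hprev : i % 2 ≠ c → 0 < i) (hc : c < 2) :
    ∃ k, ∃ hk : k + 1 < l.length, k % 2 = c ∧ l[i] ∈ s(l[k], l[k + 1]) := by
  by_cases hic : i % 2 = c
  · exact ⟨i, hnext hic, hic, Sym2.mem_mk_left _ _⟩
  · obtain ⟨k, rfl⟩ : ∃ k, i = k + 1 := ⟨i - 1, by have := hprev hic; omega⟩
    exact ⟨k, hi, by omega, Sym2.mem_mk_right _ _⟩

theorem mem_edgeSet_of_mem_pathEdges {G : SimpleGraph V} {l : List V} (hl : l.IsChain G.Adj)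
    {e : Sym2 V} (he : e ∈ pathEdges l) : e ∈ G.edgeSet := by
  obtain ⟨i, hi, rfl⟩ := mem_pathEdges_iff.1 he
  exact List.isChain_iff_getElem.1 hl i hi

section Ends
variable [DecidableEq V]

def ends (r : List V) : Finset V := r.head?.toFinset ∪ r.getLast?.toFinset

theorem mem_ends {r : List V} {v : V} :
    v ∈ ends r ↔ r.head? = some v ∨ r.getLast? = some v := by
  simp [ends]

theorem mem_of_mem_ends {r : List V} {v : V} (hv : v ∈ ends r) : v ∈ r :=
  (mem_ends.1 hv).elim List.mem_of_mem_head? List.mem_of_getLast?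

theorem getElem_zero_mem_ends {r : List V} (h : 0 < r.length) : r[0] ∈ ends r :=
  mem_ends.2 (Or.inl (by simp [List.head?_eq_getElem?]))

theorem getElem_length_sub_one_mem_ends {r : List V} (h : 0 < r.length) :
    r[r.length - 1] ∈ ends r :=
  mem_ends.2 (Or.inr (by simp [List.getLast?_eq_getElem?]))

theorem card_ends_le (r : List V) : (ends r).card ≤ 2 := by
  refine (Finset.card_union_le _ _).trans ?_
  cases r.head? <;> cases r.getLast? <;> simp

theorem card_ends {r : List V} (hr : r.Nodup) (h : 2 ≤ r.length) : (ends r).card = 2 := by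
  obtain ⟨a, b, t, rfl⟩ : ∃ a b t, r = a :: b :: t := by
    match r, h with
    | a :: b :: t, _ => exact ⟨a, b, t, rfl⟩
  have hne : a ≠ (b :: t).getLast (List.cons_ne_nil _ _) :=
    fun h => (List.nodup_cons.1 hr).1 (h ▸ List.getLast_mem _)
  simp [ends, List.getLast?_eq_some_getLast, Finset.card_pair hne]

end Ends

namespace IsAugPath
variable {G : SimpleGraph V} {M : Set (Sym2 V)} {r : List V}

theorem nodup (hr : IsAugPath G M r) : r.Nodup := hr.1

theorem two_le_length (hr : IsAugPath G M r) : 2 ≤ r.length := hr.2.2.1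

theorem length_mod_two (hr : IsAugPath G M r) : r.length % 2 = 0 := hr.2.2.2.1

theorem edge_mem_iff (hr : IsAugPath G M r) {i : ℕ} (h : i + 1 < r.length) :
    s(r[i], r[i + 1]) ∈ M ↔ i % 2 = 1 := by
  have := hr.2.2.2.2.1 i (by rw [pathEdges_length]; omega)
  rwa [List.get_eq_getElem, getElem_pathEdges] at this

theorem not_covered_of_mem_ends [DecidableEq V] (hr : IsAugPath G M r) {v : V}
    (hv : v ∈ ends r) : ¬ Covered M v :=
  hr.2.2.2.2.2 v (mem_ends.1 hv)

theorem exists_mem_pathEdges_mem (hr : IsAugPath G M r) {i : ℕ} (h0 : 0 < i)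
    (h : i + 1 < r.length) : ∃ e ∈ pathEdges r, e ∈ M ∧ r[i] ∈ e := by
  obtain ⟨k, hk, hkodd, hik⟩ :=
    exists_parity_edge_mem r (c := 1) (by omega) (fun _ => h) (fun _ => h0) (by omega)
  exact ⟨_, getElem_mem_pathEdges hk, (hr.edge_mem_iff hk).2 hkodd, hik⟩

theorem exists_mem_pathEdges_notMem (hr : IsAugPath G M r) {v : V} (hv : v ∈ r) :
    ∃ e ∈ pathEdges r, e ∉ M ∧ v ∈ e := by
  obtain ⟨i, hi, rfl⟩ := List.mem_iff_getElem.1 hv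
  have := hr.length_mod_two
  obtain ⟨k, hk, hkeven, hik⟩ :=
    exists_parity_edge_mem r (c := 0) hi (fun _ => by omega) (fun _ => by omega) (by omega)
  exact ⟨_, getElem_mem_pathEdges hk, fun h => by have := (hr.edge_mem_iff hk).1 h; omega, hik⟩

theorem mem_ends_of_not_covered [DecidableEq V] (hr : IsAugPath G M r) {v : V} (hv : v ∈ r)
    (hfree : ¬ Covered M v) : v ∈ ends r := by
  obtain ⟨i, hi, rfl⟩ := List.mem_iff_getElem.1 hv
  by_cases h0 : i = 0
  · subst h0; exact getElem_zero_mem_ends hi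
  by_cases hlast : i = r.length - 1
  · subst hlast; exact getElem_length_sub_one_mem_ends (by omega)
  obtain ⟨e, -, he, hve⟩ := hr.exists_mem_pathEdges_mem (i := i) (by omega) (by omega)
  exact absurd ⟨e, he, hve⟩ hfree

theorem mem_pathEdges_of_mem (hM : IsMatching G M) (hr : IsAugPath G M r) {e : Sym2 V}
    (he : e ∈ M) {v : V} (hv : v ∈ e) (hvr : v ∈ r) : e ∈ pathEdges r := by
  classical
  have hint : v ∉ ends r := fun h => hr.not_covered_of_mem_ends h ⟨e, he, hv⟩
  obtain ⟨i, hi, rfl⟩ := List.mem_iff_getElem.1 hvr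
  have h0 : i ≠ 0 := by rintro rfl; exact hint (getElem_zero_mem_ends hi)
  have hlast : i ≠ r.length - 1 := by
    rintro rfl; exact hint (getElem_length_sub_one_mem_ends (by omega))
  obtain ⟨f, hf, hfM, hvf⟩ := hr.exists_mem_pathEdges_mem (i := i) (by omega) (by omega)
  rwa [hM.eq_of_mem he hfM hv hvf]

theorem eq_of_notMem (hr : IsAugPath G M r) {e f : Sym2 V} (he : e ∈ pathEdges r)
    (hf : f ∈ pathEdges r) (heM : e ∉ M) (hfM : f ∉ M) {v : V} (hve : v ∈ e)
    (hvf : v ∈ f) :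
    e = f := by
  obtain ⟨i, hi, rfl⟩ := mem_pathEdges_iff.1 he
  obtain ⟨j, hj, rfl⟩ := mem_pathEdges_iff.1 hf
  have hie : i % 2 = 0 := by have := mt (hr.edge_mem_iff hi).2 heM; omega
  have hje : j % 2 = 0 := by have := mt (hr.edge_mem_iff hj).2 hfM; omega
  suffices i = j by subst this; rfl
  rcases Sym2.mem_iff.1 hve with rfl | rfl <;>
    rcases hr.nodup.eq_or_eq_of_getElem_mem _ hj hvf with h | h <;> omega

end IsAugPath

def flipEdges (Q : Set (List V)) : Set (Sym2 V) := {e | ∃ r ∈ Q, e ∈ pathEdges r}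

section Flip
variable {G : SimpleGraph V} {M : Set (Sym2 V)} {Q : Set (List V)}

theorem covered_symmDiff_flipEdges_of_mem (hQ : ∀ r ∈ Q, IsAugPath G M r) {r : List V}
    (hr : r ∈ Q) {v : V} (hv : v ∈ r) : Covered (symmDiff M (flipEdges Q)) v := by
  obtain ⟨e, he, heM, hve⟩ := (hQ r hr).exists_mem_pathEdges_notMem hv
  exact ⟨e, Set.mem_symmDiff.2 (Or.inr ⟨⟨r, hr, he⟩, heM⟩), hve⟩

theorem covered_symmDiff_flipEdges (hQ : ∀ r ∈ Q, IsAugPath G M r) {v : V}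
    (hv : Covered M v) : Covered (symmDiff M (flipEdges Q)) v := by
  obtain ⟨e, heM, hve⟩ := hv
  by_cases heF : e ∈ flipEdges Q
  · obtain ⟨r, hr, he⟩ := heF
    exact covered_symmDiff_flipEdges_of_mem hQ hr (mem_of_mem_pathEdges he hve)
  · exact ⟨e, Set.mem_symmDiff.2 (Or.inl ⟨heM, heF⟩), hve⟩

theorem IsMatching.symmDiff_flipEdges (hM : IsMatching G M) (hQ : ∀ r ∈ Q, IsAugPath G M r)
    (hdisj : ∀ r ∈ Q, ∀ s ∈ Q, r ≠ s → ∀ v : V, v ∈ r → v ∉ s) :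
    IsMatching G (symmDiff M (flipEdges Q)) := by
  have flipped_of_mem : ∀ {e f : Sym2 V} {v : V},
      e ∈ M → f ∈ flipEdges Q → v ∈ e → v ∈ f → e ∈ flipEdges Q := by
    rintro e f v heM ⟨r, hr, hf⟩ hve hvf
    exact ⟨r, hr, (hQ r hr).mem_pathEdges_of_mem hM heM hve (mem_of_mem_pathEdges hf hvf)⟩
  refine ⟨fun e he => ?_, fun e he f hf hne v hve hvf => hne ?_⟩
  · rcases Set.mem_symmDiff.1 he with ⟨heM, -⟩ | ⟨⟨r, hr, he⟩, -⟩
    · exact hM.1 heM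
    · exact mem_edgeSet_of_mem_pathEdges (hQ r hr).2.1 he
  rcases Set.mem_symmDiff.1 he with ⟨heM, heF⟩ | ⟨heF, heM⟩ <;>
    rcases Set.mem_symmDiff.1 hf with ⟨hfM, hfF⟩ | ⟨hfF, hfM⟩
  · exact hM.eq_of_mem heM hfM hve hvf
  · exact absurd (flipped_of_mem heM hfF hve hvf) heF
  · exact absurd (flipped_of_mem hfM heF hvf hve) hfF
  · obtain ⟨r, hr, he⟩ := heF
    obtain ⟨r', hr', hf⟩ := hfF
    obtain rfl : r = r' := by
      by_contra hrr'
      exact hdisj r hr r' hr' hrr' v (mem_of_mem_pathEdges he hve)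
        (mem_of_mem_pathEdges hf hvf)
    exact (hQ r hr).eq_of_notMem he hf heM hfM hve hvf

theorem IsAugPath.of_symmDiff_flipEdges (hQ : ∀ r ∈ Q, IsAugPath G M r) {p : List V}
    (hp : IsAugPath G (symmDiff M (flipEdges Q)) p) (hpQ : ∀ r ∈ Q, ∀ v ∈ p, v ∉ r) :
    IsAugPath G M p := by
  refine ⟨hp.nodup, hp.2.1, hp.two_le_length, hp.length_mod_two, fun i h => ?_,
    fun v hv hcov => hp.2.2.2.2.2 v hv (covered_symmDiff_flipEdges hQ hcov)⟩
  have hF : (pathEdges p).get ⟨i, h⟩ ∉ flipEdges Q := by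
    rintro ⟨r, hr, he⟩
    have hv : p[i]'(by rw [pathEdges_length] at h; omega) ∈ (pathEdges p).get ⟨i, h⟩ := by
      simp [getElem_pathEdges]
    exact hpQ r hr _ (List.getElem_mem _) (mem_of_mem_pathEdges he hv)
  rw [← hp.2.2.2.2.1 i h, Set.mem_symmDiff]
  tauto

end Flip

structure IsAltPath (M N : Set (Sym2 V)) (l : List V) : Prop where
  nodup : l.Nodup
  not_covered_head : ∀ h : 0 < l.length, ¬ Covered M l[0]
  edge_mem_iff_odd : ∀ i (h : i + 1 < l.length), s(l[i], l[i + 1]) ∈ M ↔ i % 2 = 1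
  edge_mem_iff_even : ∀ i (h : i + 1 < l.length), s(l[i], l[i + 1]) ∈ N ↔ i % 2 = 0

section Alternating
variable {G : SimpleGraph V} {M N : Set (Sym2 V)} {l : List V}

theorem isAltPath_singleton {x : V} (hx : ¬ Covered M x) : IsAltPath M N [x] :=
  ⟨List.nodup_singleton x, fun _ => hx, fun _ h => by simp at h, fun _ h => by simp at h⟩

theorem edge_append_singleton (l : List V) (w : V) {i : ℕ} (h : i + 1 < (l ++ [w]).length) :
    s((l ++ [w])[i], (l ++ [w])[i + 1]) =
      if h' : i + 1 < l.length then s(l[i], l[i + 1])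
      else s(l[i]'(by simp at h; omega), w) := by
  split_ifs with h'
  · rw [List.getElem_append_left (by omega), List.getElem_append_left h']
  · rw [List.getElem_append_left (by simp at h; omega),
      List.getElem_concat_length (by simp at h; omega)]

theorem IsAltPath.append (hl : IsAltPath M N l) (hne : 0 < l.length) {w : V} (hw : w ∉ l)
    (hwM : s(l[l.length - 1], w) ∈ M ↔ l.length % 2 = 0)
    (hwN : s(l[l.length - 1], w) ∈ N ↔ l.length % 2 = 1) : IsAltPath M N (l ++ [w]) where
  nodup := hl.nodup.append (List.nodup_singleton w) (by simpa using hw)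
  not_covered_head _ := by
    rw [List.getElem_append_left hne]
    exact hl.not_covered_head hne
  edge_mem_iff_odd i h := by
    rw [edge_append_singleton]
    split_ifs with h'
    · exact hl.edge_mem_iff_odd i h'
    · obtain rfl : i = l.length - 1 := by simp at h; omega
      rw [hwM]
      omega
  edge_mem_iff_even i h := by
    rw [edge_append_singleton]
    split_ifs with h'
    · exact hl.edge_mem_iff_even i h'
    · obtain rfl : i = l.length - 1 := by simp at h; omega
      rw [hwN]
      omega

theorem IsAltPath.notMem_of_adj (hM : IsMatching G M) (hN : IsMatching G N)
    (hl : IsAltPath M N l) (hne : 0 < l.length) {w : V}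
    (hwM : s(l[l.length - 1], w) ∈ M ↔ l.length % 2 = 0)
    (hwN : s(l[l.length - 1], w) ∈ N ↔ l.length % 2 = 1) : w ∉ l := by
  intro hw
  obtain ⟨j, hj, rfl⟩ := List.mem_iff_getElem.1 hw
  have hadj : G.Adj l[l.length - 1] l[j] := by
    rcases Nat.mod_two_eq_zero_or_one l.length with h | h
    · exact hM.1 (hwM.2 h)
    · exact hN.1 (hwN.2 h)
  have hjlast : j + 1 < l.length := by
    by_contra h
    obtain rfl : j = l.length - 1 := by omega
    exact hadj.ne rfl
  rcases Nat.mod_two_eq_zero_or_one l.length with hpar | hpar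
  · have hj0 : 0 < j := by
      rcases Nat.eq_zero_or_pos j with rfl | h
      · exact absurd ⟨_, hwM.2 hpar, Sym2.mem_mk_right _ _⟩ (hl.not_covered_head hne)
      · exact h
    obtain ⟨k, hk, hkodd, hjk⟩ :=
      exists_parity_edge_mem l (c := 1) hj (fun _ => hjlast) (fun _ => hj0) (by omega)
    have heq := hM.eq_of_mem (hwM.2 hpar) ((hl.edge_mem_iff_odd k hk).2 hkodd)
      (Sym2.mem_mk_right _ _) hjk
    have := hl.nodup.add_two_eq_length hk (heq ▸ Sym2.mem_mk_left _ _)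
    omega
  · obtain ⟨k, hk, hkeven, hjk⟩ :=
      exists_parity_edge_mem l (c := 0) hj (fun _ => hjlast) (fun _ => by omega) (by omega)
    have heq := hN.eq_of_mem (hwN.2 hpar) ((hl.edge_mem_iff_even k hk).2 hkeven)
      (Sym2.mem_mk_right _ _) hjk
    have := hl.nodup.add_two_eq_length hk (heq ▸ Sym2.mem_mk_left _ _)
    omega

theorem IsAltPath.notMem_of_getLast_mem_of_even (hN : IsMatching G N) (hl : IsAltPath M N l)
    (heven : l.length % 2 = 0) (hne : 0 < l.length) {f : Sym2 V} (hfM : f ∈ M)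
    (hz : l[l.length - 1] ∈ f) : f ∉ N := by
  intro hfN
  obtain ⟨k, hk, hkeven, hzk⟩ := exists_parity_edge_mem l (i := l.length - 1) (c := 0)
    (by omega) (fun _ => by omega) (fun _ => by omega) (by omega)
  have heq := hN.eq_of_mem hfN ((hl.edge_mem_iff_even k hk).2 hkeven) hz hzk
  have := (hl.edge_mem_iff_odd k hk).1 (heq ▸ hfM)
  omega

theorem IsAltPath.notMem_of_getLast_mem_of_odd (hM : IsMatching G M) (hl : IsAltPath M N l)
    (hodd : l.length % 2 = 1) {f : Sym2 V} (hfN : f ∈ N) (hz : l[l.length - 1] ∈ f) :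
    f ∉ M := by
  intro hfM
  have hlen : 1 < l.length := by
    by_contra h
    have hz₀ : l[l.length - 1] = l[0] := getElem_congr_idx (by omega)
    exact hl.not_covered_head (by omega) (hz₀ ▸ (⟨f, hfM, hz⟩ : Covered M l[l.length - 1]))
  obtain ⟨k, hk, hkodd, hzk⟩ := exists_parity_edge_mem l (i := l.length - 1) (c := 1)
    (by omega) (fun _ => by omega) (fun _ => by omega) (by omega)
  have heq := hM.eq_of_mem hfM ((hl.edge_mem_iff_odd k hk).2 hkodd) hz hzk
  have := (hl.edge_mem_iff_even k hk).1 (heq ▸ hfN)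
  omega

theorem IsAltPath.exists_append (hM : IsMatching G M) (hN : IsMatching G N)
    (hl : IsAltPath M N l) (hne : 0 < l.length) (hcov : Covered N l[l.length - 1])
    (hext : l.length % 2 = 0 → Covered M l[l.length - 1]) :
    ∃ w, IsAltPath M N (l ++ [w]) ∧ s(l[l.length - 1], w) ∈ symmDiff M N := by
  suffices ∃ w, (s(l[l.length - 1], w) ∈ M ↔ l.length % 2 = 0) ∧
      (s(l[l.length - 1], w) ∈ N ↔ l.length % 2 = 1) by
    obtain ⟨w, hwM, hwN⟩ := this
    refine ⟨w, hl.append hne (hl.notMem_of_adj hM hN hne hwM hwN) hwM hwN, ?_⟩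
    rw [Set.mem_symmDiff, hwM, hwN]
    omega
  rcases Nat.mod_two_eq_zero_or_one l.length with hpar | hpar
  · obtain ⟨f, hfM, hzf⟩ := hext hpar
    obtain ⟨w, rfl⟩ := Sym2.mem_iff_exists.1 hzf
    exact ⟨w, iff_of_true hfM hpar,
      iff_of_false (hl.notMem_of_getLast_mem_of_even hN hpar hne hfM hzf) (by omega)⟩
  · obtain ⟨f, hfN, hzf⟩ := hcov
    obtain ⟨w, rfl⟩ := Sym2.mem_iff_exists.1 hzf
    exact ⟨w, iff_of_false (hl.notMem_of_getLast_mem_of_odd hM hpar hfN hzf) (by omega),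
      iff_of_true hfN hpar⟩

theorem IsAltPath.isAugPath (hM : IsMatching G M) (hN : IsMatching G N) (hl : IsAltPath M N l)
    (hne : 0 < l.length) (heven : l.length % 2 = 0) (hfree : ¬ Covered M l[l.length - 1]) :
    IsAugPath G M l := by
  refine ⟨hl.nodup, List.isChain_iff_getElem.2 fun i h => ?_, by omega, heven, fun i h => ?_,
    fun v hv => ?_⟩
  · rcases Nat.mod_two_eq_zero_or_one i with hi | hi
    · exact hN.1 ((hl.edge_mem_iff_even i h).2 hi)
    · exact hM.1 ((hl.edge_mem_iff_odd i h).2 hi)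
  · rw [List.get_eq_getElem, getElem_pathEdges]
    exact hl.edge_mem_iff_odd i _
  · rw [List.head?_eq_getElem?, List.getLast?_eq_getElem?, List.getElem?_eq_some_iff,
      List.getElem?_eq_some_iff] at hv
    rcases hv with ⟨_, rfl⟩ | ⟨_, rfl⟩
    · exact hl.not_covered_head hne
    · exact hfree

theorem IsAltPath.mem_of_mem_symmDiff (hM : IsMatching G M) (hN : IsMatching G N)
    (hl : IsAltPath M N l) (haug : IsAugPath G M l) {v w : V} (hv : v ∈ l)
    (hvw : s(v, w) ∈ symmDiff M N) : w ∈ l := by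
  suffices s(v, w) ∈ pathEdges l from mem_of_mem_pathEdges this (Sym2.mem_mk_right _ _)
  rcases Set.mem_symmDiff.1 hvw with ⟨hvwM, -⟩ | ⟨hvwN, -⟩
  · exact haug.mem_pathEdges_of_mem hM hvwM (Sym2.mem_mk_left _ _) hv
  · obtain ⟨i, hi, rfl⟩ := List.mem_iff_getElem.1 hv
    have := haug.length_mod_two
    obtain ⟨k, hk, hkeven, hik⟩ :=
      exists_parity_edge_mem l (c := 0) hi (fun _ => by omega) (fun _ => by omega) (by omega)
    rw [hN.eq_of_mem hvwN ((hl.edge_mem_iff_even k hk).2 hkeven) (Sym2.mem_mk_left _ _) hik]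
    exact getElem_mem_pathEdges hk

theorem IsAltPath.exists_isAugPath [DecidableEq V] (hM : IsMatching G M) (hN : IsMatching G N)
    {R : Finset V} (hR : ∀ v w, s(v, w) ∈ symmDiff M N → v ∈ R → w ∈ R)
    (hcov : ∀ v ∈ R, Covered N v) (hl : IsAltPath M N l) (hne : 0 < l.length)
    (hlR : ∀ v ∈ l, v ∈ R) :
    ∃ q, IsAugPath G M q ∧ IsAltPath M N q ∧ ∀ v ∈ q, v ∈ R := by
  induction hn : R.card - l.length using Nat.strong_induction_on generalizing l with
  | _ n ih =>
  by_cases hstop : l.length % 2 = 0 ∧ ¬ Covered M l[l.length - 1]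
  · exact ⟨l, hl.isAugPath hM hN hne hstop.1 hstop.2, hl, hlR⟩
  have hlast : l[l.length - 1] ∈ R := hlR _ (List.getElem_mem _)
  obtain ⟨w, hlw, hw⟩ := hl.exists_append hM hN hne (hcov _ hlast)
    fun heven => not_not.1 fun hfree => hstop ⟨heven, hfree⟩
  have hlwR : ∀ v ∈ l ++ [w], v ∈ R := by
    simp only [List.mem_append, List.mem_singleton]
    rintro v (hv | rfl)
    exacts [hlR v hv, hR _ _ hw hlast]
  have hcard : (l ++ [w]).length ≤ R.card := by
    rw [← List.toFinset_card_of_nodup hlw.nodup]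
    exact Finset.card_le_card fun v hv => hlwR v (List.mem_toFinset.1 hv)
  exact ih _ (by simp at hcard ⊢; omega) hlw (by simp) hlwR rfl

end Alternating

/-- Induction on `R`: an `M`-augmenting path grown inside `R` from a vertex of `S` contains at most
two vertices of `S` and at least `L` vertices of `R`, and removing it leaves `R` closed. -/
theorem card_mul_le_two_mul_card [DecidableEq V] {G : SimpleGraph V} {M N : Set (Sym2 V)}
    (hM : IsMatching G M) (hN : IsMatching G N) {L : ℕ}
    (hL : ∀ q, IsAugPath G M q → L ≤ q.length) (R : Finset V)
    (hR : ∀ v w, s(v, w) ∈ symmDiff M N → v ∈ R → w ∈ R) (hcov : ∀ v ∈ R, Covered N v)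
    (S : Finset V) (hS : ∀ x ∈ S, x ∈ R ∧ ¬ Covered M x) :
    S.card * L ≤ 2 * R.card := by
  induction R using Finset.strongInduction generalizing S with
  | H R ih =>
  obtain rfl | ⟨x, hx⟩ := S.eq_empty_or_nonempty
  · simp
  obtain ⟨q, hq, hqalt, hqR⟩ := (isAltPath_singleton (N := N) (hS x hx).2).exists_isAugPath
    hM hN hR hcov (by simp) (by simpa using (hS x hx).1)
  have hQR : q.toFinset ⊆ R := fun v hv => hqR v (List.mem_toFinset.1 hv)
  have hQ : q.toFinset.Nonempty := ⟨q[0]'(by have := hq.two_le_length; omega), by simp⟩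
  have hR' : ∀ v w, s(v, w) ∈ symmDiff M N →
      v ∈ R \ q.toFinset → w ∈ R \ q.toFinset := by
    intro v w hvw hv
    rw [Finset.mem_sdiff, List.mem_toFinset] at hv ⊢
    refine ⟨hR v w hvw hv.1, fun hw => hv.2 ?_⟩
    exact hqalt.mem_of_mem_symmDiff hM hN hq hw (Sym2.eq_swap ▸ hvw)
  have hS' : ∀ x ∈ S \ q.toFinset, x ∈ R \ q.toFinset ∧ ¬ Covered M x := by
    intro x hx
    rw [Finset.mem_sdiff] at hx ⊢
    exact ⟨⟨(hS x hx.1).1, hx.2⟩, (hS x hx.1).2⟩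
  have hSq : (S ∩ q.toFinset).card ≤ 2 := by
    refine (Finset.card_le_card fun v hv => ?_).trans (card_ends_le q)
    rw [Finset.mem_inter, List.mem_toFinset] at hv
    exact hq.mem_ends_of_not_covered hv.2 (hS v hv.1).2
  have ih' := ih _ (Finset.sdiff_ssubset hQR hQ) hR'
    (fun v hv => hcov v (Finset.mem_sdiff.1 hv).1) _ hS'
  have hS_card := Finset.card_sdiff_add_card_inter S q.toFinset
  have hR_card := Finset.card_sdiff_add_card_eq_card hQR
  rw [List.toFinset_card_of_nodup hq.nodup] at hR_card
  have := hL q hq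
  nlinarith

theorem finite_setOf_meets {Q : Set (List V)}
    (hdisj : ∀ r ∈ Q, ∀ s ∈ Q, r ≠ s → ∀ v : V, v ∈ r → v ∉ s) (p : List V) :
    {r ∈ Q | ∃ v ∈ p, v ∈ r}.Finite := by
  have heq : {r ∈ Q | ∃ v ∈ p, v ∈ r} = ⋃ v ∈ {v | v ∈ p}, {r ∈ Q | v ∈ r} := by
    ext r
    simp only [Set.mem_ofPred_eq, Set.mem_iUnion, exists_prop]
    tauto
  rw [heq]
  refine p.finite_toSet.biUnion fun v _ => Set.Subsingleton.finite ?_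
  rintro r ⟨hr, hvr⟩ s ⟨hs, hvs⟩
  by_contra hrs
  exact hdisj r hr s hs hrs v hvr hvs

section Counting
variable [DecidableEq V]

theorem card_ends_union_biUnion_ends {p : List V} (hp : p.Nodup) (hp₂ : 2 ≤ p.length)
    {T : Finset (List V)} (hT : ∀ r ∈ T, r.Nodup ∧ 2 ≤ r.length)
    (hdisj : ∀ r ∈ T, ∀ s ∈ T, r ≠ s → ∀ v : V, v ∈ r → v ∉ s)
    (hpT : ∀ r ∈ T, ∀ v ∈ ends p, v ∉ r) :
    (ends p ∪ T.biUnion ends).card = 2 + 2 * T.card := by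
  have hpT' : Disjoint (ends p) (T.biUnion ends) := by
    simp only [Finset.disjoint_left, Finset.mem_biUnion, not_exists, not_and]
    exact fun v hvp r hr hvr => hpT r hr v hvp (mem_of_mem_ends hvr)
  rw [Finset.card_union_of_disjoint hpT', card_ends hp hp₂,
    Finset.card_biUnion fun r hr s hs hrs => Finset.disjoint_left.2 fun v hvr hvs =>
      hdisj r hr s hs hrs v (mem_of_mem_ends hvr) (mem_of_mem_ends hvs),
    Finset.sum_congr rfl fun r hr => card_ends (hT r hr).1 (hT r hr).2, Finset.sum_const,
    smul_eq_mul, mul_comm]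

theorem card_toFinset_union_biUnion_le (p : List V) {T : Finset (List V)} {n : ℕ}
    (hT : ∀ r ∈ T, r.length = n + 1 ∧ ∃ v ∈ p, v ∈ r) :
    (p.toFinset ∪ T.biUnion List.toFinset).card ≤ p.length + T.card * n := by
  have heq : p.toFinset ∪ T.biUnion List.toFinset =
      p.toFinset ∪ T.biUnion fun r => r.toFinset \ p.toFinset := by
    ext v
    simp only [Finset.mem_union, Finset.mem_biUnion, Finset.mem_sdiff]
    tauto
  have hnew : ∀ r ∈ T, (r.toFinset \ p.toFinset).card ≤ n := by
    intro r hr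
    obtain ⟨hlen, v, hvp, hvr⟩ := hT r hr
    have hshared : 0 < (r.toFinset ∩ p.toFinset).card :=
      Finset.card_pos.2 ⟨v, by simp [hvp, hvr]⟩
    have := Finset.card_sdiff_add_card_inter r.toFinset p.toFinset
    have := r.toFinset_card_le
    omega
  rw [heq]
  calc _ ≤ p.toFinset.card + (T.biUnion fun r => r.toFinset \ p.toFinset).card :=
        Finset.card_union_le _ _
    _ ≤ p.length + ∑ r ∈ T, (r.toFinset \ p.toFinset).card :=
        add_le_add p.toFinset_card_le Finset.card_biUnion_le
    _ ≤ p.length + T.card * n := by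
        simpa using Finset.sum_le_card_nsmul T _ _ hnew

theorem mem_toFinset_union_biUnion_of_edge {Q : Set (List V)}
    (hdisj : ∀ r ∈ Q, ∀ s ∈ Q, r ≠ s → ∀ v : V, v ∈ r → v ∉ s) {p : List V}
    {T : Finset (List V)} (hT : ∀ r, r ∈ T ↔ r ∈ Q ∧ ∃ v ∈ p, v ∈ r) {v w : V}
    (hvw : s(v, w) ∈ flipEdges Q ∨ s(v, w) ∈ pathEdges p)
    (hv : v ∈ p.toFinset ∪ T.biUnion List.toFinset) :
    w ∈ p.toFinset ∪ T.biUnion List.toFinset := by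
  simp only [Finset.mem_union, List.mem_toFinset, Finset.mem_biUnion] at hv ⊢
  rcases hvw with ⟨r, hr, he⟩ | he
  · have hvr := mem_of_mem_pathEdges he (Sym2.mem_mk_left _ _)
    refine Or.inr ⟨r, (hT r).2 ⟨hr, ?_⟩, mem_of_mem_pathEdges he (Sym2.mem_mk_right _ _)⟩
    rcases hv with hvp | ⟨r', hr', hvr'⟩
    · exact ⟨v, hvp, hvr⟩
    · obtain ⟨hr'Q, hr'p⟩ := (hT r').1 hr'
      obtain rfl : r' = r := by
        by_contra hne
        exact hdisj r' hr'Q r hr hne v hvr' hvr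
      exact hr'p
  · exact Or.inl (mem_of_mem_pathEdges he (Sym2.mem_mk_right _ _))

end Counting

theorem mem_toFinset_and_not_covered_of_mem_ends [DecidableEq V] {G : SimpleGraph V}
    {M : Set (Sym2 V)} {Q : Set (List V)} (hQ : ∀ r ∈ Q, IsAugPath G M r) {p : List V}
    (hp : IsAugPath G (symmDiff M (flipEdges Q)) p) {T : Finset (List V)}
    (hTQ : ∀ r ∈ T, r ∈ Q) {x : V} (hx : x ∈ ends p ∪ T.biUnion ends) :
    x ∈ p.toFinset ∪ T.biUnion List.toFinset ∧ ¬ Covered M x := by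
  simp only [Finset.mem_union, Finset.mem_biUnion, List.mem_toFinset] at hx ⊢
  rcases hx with hx | ⟨r, hr, hx⟩
  · exact ⟨Or.inl (mem_of_mem_ends hx),
      fun hcov => hp.not_covered_of_mem_ends hx (covered_symmDiff_flipEdges hQ hcov)⟩
  · exact ⟨Or.inr ⟨r, hr, mem_of_mem_ends hx⟩,
      (hQ r (hTQ r hr)).not_covered_of_mem_ends hx⟩

theorem card_ends_union_mul_le [DecidableEq V] {G : SimpleGraph V} {M : Set (Sym2 V)}
    (hM : IsMatching G M) {L : ℕ} (hL : ∀ q, IsAugPath G M q → L ≤ q.length)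
    {Q : Set (List V)} (hQ : ∀ r ∈ Q, IsAugPath G M r)
    (hdisj : ∀ r ∈ Q, ∀ s ∈ Q, r ≠ s → ∀ v : V, v ∈ r → v ∉ s) {p : List V}
    (hp : IsAugPath G (symmDiff M (flipEdges Q)) p) {T : Finset (List V)}
    (hT : ∀ r, r ∈ T ↔ r ∈ Q ∧ ∃ v ∈ p, v ∈ r) :
    (ends p ∪ T.biUnion ends).card * L ≤ 2 * (p.toFinset ∪ T.biUnion List.toFinset).card := by
  have hTQ : ∀ r ∈ T, r ∈ Q := fun r hr => ((hT r).1 hr).1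
  have hp' : ∀ r ∈ ({p} : Set (List V)), IsAugPath G (symmDiff M (flipEdges Q)) r := by
    rintro r rfl; exact hp
  have hN := (hM.symmDiff_flipEdges hQ hdisj).symmDiff_flipEdges hp'
    (by rintro r rfl s rfl hrs; exact absurd rfl hrs)
  set N := symmDiff (symmDiff M (flipEdges Q)) (flipEdges {p}) with hN_def
  set R := p.toFinset ∪ T.biUnion List.toFinset
  have hR : ∀ v w, s(v, w) ∈ symmDiff M N → v ∈ R → w ∈ R := by
    intro v w hvw
    rw [hN_def, ← symmDiff_assoc, symmDiff_symmDiff_cancel_left] at hvw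
    refine mem_toFinset_union_biUnion_of_edge hdisj hT ?_
    rcases Set.mem_symmDiff.1 hvw with ⟨h, -⟩ | ⟨⟨q, rfl, h⟩, -⟩
    exacts [Or.inl h, Or.inr h]
  have hcov : ∀ v ∈ R, Covered N v := by
    intro v hv
    simp only [R, Finset.mem_union, Finset.mem_biUnion, List.mem_toFinset] at hv
    rcases hv with hv | ⟨r, hr, hv⟩
    · exact covered_symmDiff_flipEdges_of_mem hp' rfl hv
    · exact covered_symmDiff_flipEdges hp' (covered_symmDiff_flipEdges_of_mem hQ (hTQ r hr) hv)
  exact card_mul_le_two_mul_card hM hN hL R hR hcov _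
    fun x hx => mem_toFinset_and_not_covered_of_mem_ends hQ hp hTQ hx

theorem notMem_of_flipped_augPath {G : SimpleGraph V} {M : Set (Sym2 V)}
    (hM : IsMatching G M) {K : ℕ}
    (hno : ∀ r : List V, IsAugPath G M r → r.length ≤ 2 * K → False)
    {P : Set (List V)} (hP : ∀ r ∈ P, IsAugPath G M r ∧ r.length = 2 * K + 2)
    (hdisj : ∀ r ∈ P, ∀ s ∈ P, r ≠ s → ∀ v : V, v ∈ r → v ∉ s) {p : List V}
    (hp : IsAugPath G (symmDiff M (flipEdges P)) p) (hlen : p.length ≤ 2 * K + 2) :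
    ∀ r ∈ P, ∀ v ∈ p, v ∉ r := by
  classical
  intro r₀ hr₀ v₀ hv₀p hv₀r
  set T := (finite_setOf_meets hdisj p).toFinset
  have hT : ∀ r, r ∈ T ↔ r ∈ P ∧ ∃ v ∈ p, v ∈ r :=
    fun _ => Set.Finite.mem_toFinset _
  have hTP : ∀ r ∈ T, IsAugPath G M r ∧ r.length = 2 * K + 2 :=
    fun r hr => hP r ((hT r).1 hr).1
  have hL : ∀ q, IsAugPath G M q → 2 * K + 2 ≤ q.length := by
    intro q hq
    have := hq.length_mod_two
    by_contra h
    exact hno q hq (by omega)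
  have key := card_ends_union_mul_le hM hL (fun r hr => (hP r hr).1) hdisj hp hT
  rw [card_ends_union_biUnion_ends hp.nodup hp.two_le_length
    (fun r hr => ⟨(hTP r hr).1.nodup, (hTP r hr).1.two_le_length⟩)
    (fun r hr s hs => hdisj r ((hT r).1 hr).1 s ((hT s).1 hs).1)
    fun r hr v hv hvr => hp.not_covered_of_mem_ends hv
      (covered_symmDiff_flipEdges_of_mem (fun r hr => (hP r hr).1) ((hT r).1 hr).1 hvr)] at key
  have hRcard : (p.toFinset ∪ T.biUnion List.toFinset).card ≤ p.length + T.card * (2 * K + 1) :=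
    card_toFinset_union_biUnion_le p fun r hr => ⟨(hTP r hr).2, ((hT r).1 hr).2⟩
  have hT₀ : T.card = 0 := by nlinarith
  exact Finset.card_ne_zero.2 ⟨r₀, (hT r₀).2 ⟨hr₀, v₀, hv₀p, hv₀r⟩⟩ hT₀

theorem augPath_of_flipped_augPath_general (G : SimpleGraph V) (M : Set (Sym2 V))
    (hM : IsMatching G M) (K : ℕ)
    (hno : ∀ r : List V, IsAugPath G M r → r.length ≤ 2 * K → False)
    (P : Set (List V))
    (hP : ∀ r ∈ P, IsAugPath G M r ∧ r.length = 2 * K + 2)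
    (hdisj : ∀ r ∈ P, ∀ s ∈ P, r ≠ s → ∀ v : V, v ∈ r → v ∉ s)
    (p : List V)
    (hp : IsAugPath G (symmDiff M {e | ∃ r ∈ P, e ∈ pathEdges r}) p)
    (hlen : p.length ≤ 2 * K + 2) :
    IsAugPath G M p :=
  hp.of_symmDiff_flipEdges (fun r hr => (hP r hr).1)
    (notMem_of_flipped_augPath hM hno hP hdisj hp hlen)

/-- Let `M` be a matching with no augmenting paths of length `≤ 2K-1`
(edges), and let `M'` be obtained by flipping a set `P` of pairwise vertex-disjoint
`(2K+1)`-augmenting paths. Then any augmenting path for `M'` of length `≤ 2K+1`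
is already an augmenting path for `M`. -/
theorem augPath_of_flipped_augPath (G : SimpleGraph V) (M : Set (Sym2 V))
    (hM : IsMatching G M) (K : ℕ) (hK : 1 ≤ K)
    (hno : ∀ r : List V, IsAugPath G M r → r.length ≤ 2 * K → False)
    (P : Set (List V))
    (hP : ∀ r ∈ P, IsAugPath G M r ∧ r.length = 2 * K + 2)
    (hdisj : ∀ r ∈ P, ∀ s ∈ P, r ≠ s → ∀ v : V, v ∈ r → v ∉ s)
    (p : List V)
    (hp : IsAugPath G (symmDiff M {e | ∃ r ∈ P, e ∈ pathEdges r}) p)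
    (hlen : p.length ≤ 2 * K + 2) :
    IsAugPath G M p :=
  augPath_of_flipped_augPath_general G M hM K hno P hP hdisj p hp hlen
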